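/- arXiv:math/0611163 — 2 statements merged into one kernel-verified Lean document; each statement's English description precedes it below -/
import Mathlib

section
/- Let n ≥ 2, ω, ω⊥ orthonormal in ℝⁿ, c > 0, τ > c^{-2}, z = cτ(ω + i√(1-1/(c²τ)) ω⊥), and v(x,t) = exp(-(z·z)t)exp(x·z). Fix s ∈ ℝ and (x,t) ∈ ℝⁿ × ℝ. If s < t - c x·ω then e^{τs}|v(x,t)| → 0 as τ → ∞, and if s > t - c x·ω then e^{τs}|v(x,t)| → ∞ as τ → ∞. -/
open Filter

/-! With `a = cτ` and `b = cτ√(1 - 1/(c²τ))`, orthonormality gives `z·z = a² - b² = τ`, and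
`Re (x·z) = cτ x·ω` because the `ω⊥`-coefficient of `z` is purely imaginary.  Hence
`e^{τs}|v(x,t)| = exp (τ (s - (t - c x·ω)))` for all `τ > c⁻²`. -/

section Orthonormal

variable {ι : Type*} [Fintype ι]

theorem sum_ofReal_mul_ofReal_eq_inner (u w : EuclideanSpace ℝ ι) :
    ∑ j, (u j : ℂ) * (w j : ℂ) = (inner ℝ u w : ℝ) := by
  simp [PiLp.inner_apply, mul_comm]

theorem sum_ofReal_mul_combination_eq_inner (x ω ωperp : EuclideanSpace ℝ ι) (α β : ℂ) :
    ∑ j, (x j : ℂ) * (α * ω j + β * ωperp j) =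
      α * (inner ℝ x ω : ℝ) + β * (inner ℝ x ωperp : ℝ) := by
  simp only [← sum_ofReal_mul_ofReal_eq_inner, Finset.mul_sum, ← Finset.sum_add_distrib]
  exact Finset.sum_congr rfl fun j _ => by ring

theorem sum_combination_sq_of_orthonormal {ω ωperp : EuclideanSpace ℝ ι}
    (hω : ‖ω‖ = 1) (hωperp : ‖ωperp‖ = 1) (horth : (inner ℝ ω ωperp : ℝ) = 0) (α β : ℂ) :
    ∑ j, (α * ω j + β * ωperp j) ^ 2 = α ^ 2 + β ^ 2 := by
  have hnorm {u : EuclideanSpace ℝ ι} (hu : ‖u‖ = 1) : (inner ℝ u u : ℝ) = 1 := by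
    rw [real_inner_self_eq_norm_sq, hu, one_pow]
  have hsum : ∑ j, (α * ω j + β * ωperp j) ^ 2 =
      α ^ 2 * ∑ j, (ω j : ℂ) * ω j + 2 * α * β * ∑ j, (ω j : ℂ) * ωperp j +
        β ^ 2 * ∑ j, (ωperp j : ℂ) * ωperp j := by
    simp only [Finset.mul_sum, ← Finset.sum_add_distrib]
    exact Finset.sum_congr rfl fun j _ => by ring
  rw [hsum, sum_ofReal_mul_ofReal_eq_inner, sum_ofReal_mul_ofReal_eq_inner,
    sum_ofReal_mul_ofReal_eq_inner, hnorm hω, hnorm hωperp, horth]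
  push_cast
  ring

theorem norm_exp_neg_sum_sq_mul_exp_sum {ω ωperp : EuclideanSpace ℝ ι}
    (hω : ‖ω‖ = 1) (hωperp : ‖ωperp‖ = 1) (horth : (inner ℝ ω ωperp : ℝ) = 0)
    (a b t : ℝ) (x : EuclideanSpace ℝ ι) :
    ‖Complex.exp (-(∑ j, ((a : ℂ) * ω j + Complex.I * b * ωperp j) ^ 2) * t) *
        Complex.exp (∑ j, (x j : ℂ) * ((a : ℂ) * ω j + Complex.I * b * ωperp j))‖ =
      Real.exp ((b ^ 2 - a ^ 2) * t + a * (inner ℝ x ω : ℝ)) := by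
  rw [sum_combination_sq_of_orthonormal hω hωperp horth, sum_ofReal_mul_combination_eq_inner,
    norm_mul, Complex.norm_exp, Complex.norm_exp, ← Real.exp_add]
  have hsq : (a : ℂ) ^ 2 + (Complex.I * b) ^ 2 = ((a ^ 2 - b ^ 2 : ℝ) : ℂ) := by
    push_cast
    linear_combination (b : ℂ) ^ 2 * Complex.I_sq
  rw [hsq, ← Complex.ofReal_neg, ← Complex.ofReal_mul]
  congr 1
  simp only [Complex.ofReal_re, Complex.add_re, Complex.mul_re, Complex.ofReal_im, Complex.I_re,
    Complex.I_im]
  ring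

end Orthonormal

theorem sq_mul_one_sub_sqrt_one_sub_inv_sq {c τ : ℝ} (hcτ : 1 ≤ c ^ 2 * τ) :
    (c * τ) ^ 2 * (1 - Real.sqrt (1 - 1 / (c ^ 2 * τ)) ^ 2) = τ := by
  have hpos : 0 < c ^ 2 * τ := by linarith
  rw [Real.sq_sqrt (by rw [sub_nonneg, div_le_one hpos]; exact hcτ), sub_sub_cancel,
    mul_one_div, div_eq_iff hpos.ne']
  ring

theorem tendsto_exp_mul_const_atTop_nhds_zero {k : ℝ} (hk : k < 0) :
    Tendsto (fun τ : ℝ => Real.exp (τ * k)) atTop (nhds 0) :=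
  Real.tendsto_exp_atBot.comp (tendsto_id.atTop_mul_const_of_neg hk)

theorem tendsto_exp_mul_const_atTop_atTop {k : ℝ} (hk : 0 < k) :
    Tendsto (fun τ : ℝ => Real.exp (τ * k)) atTop atTop :=
  Real.tendsto_exp_atTop.comp (tendsto_id.atTop_mul_const hk)

theorem stmt7_general (n : ℕ)
    (ω ωperp : EuclideanSpace ℝ (Fin n))
    (hω : ‖ω‖ = 1) (hωperp : ‖ωperp‖ = 1) (horth : (inner ℝ ω ωperp : ℝ) = 0)
    (c : ℝ) (hc : 0 < c)
    (z : ℝ → Fin n → ℂ)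
    (hz : ∀ τ : ℝ, c⁻¹ ^ 2 < τ → ∀ j, z τ j = (c : ℂ) * τ *
      ((ω j : ℂ) + Complex.I * (Real.sqrt (1 - 1 / (c ^ 2 * τ)) : ℂ) * (ωperp j : ℂ)))
    (v : EuclideanSpace ℝ (Fin n) → ℝ → ℝ → ℂ)
    (hv : ∀ x t τ, v x t τ =
      Complex.exp (-(∑ j, z τ j ^ 2) * t) * Complex.exp (∑ j, (x j : ℂ) * z τ j))
    (x : EuclideanSpace ℝ (Fin n)) (t s : ℝ) :
    (s < t - c * (inner ℝ x ω : ℝ) →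
      Tendsto (fun τ : ℝ => Real.exp (τ * s) * ‖v x t τ‖) atTop (nhds 0)) ∧
    (s > t - c * (inner ℝ x ω : ℝ) →
      Tendsto (fun τ : ℝ => Real.exp (τ * s) * ‖v x t τ‖) atTop atTop) := by
  have hexp : (fun τ : ℝ => Real.exp (τ * s) * ‖v x t τ‖)
      =ᶠ[atTop] fun τ => Real.exp (τ * (s - (t - c * (inner ℝ x ω : ℝ)))) := by
    filter_upwards [eventually_gt_atTop (c⁻¹ ^ 2)] with τ hτ
    have hcτ : 1 ≤ c ^ 2 * τ := by
      rw [inv_pow, inv_lt_iff_one_lt_mul₀' (by positivity)] at hτ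
      exact hτ.le
    have hzτ : z τ = fun j => ((c * τ : ℝ) : ℂ) * ω j +
        Complex.I * ((c * τ * Real.sqrt (1 - 1 / (c ^ 2 * τ)) : ℝ) : ℂ) * ωperp j := by
      funext j
      rw [hz τ hτ j]
      push_cast
      ring
    rw [hv, hzτ, norm_exp_neg_sum_sq_mul_exp_sum hω hωperp horth, ← Real.exp_add]
    congr 1
    linear_combination (-t) * sq_mul_one_sub_sqrt_one_sub_inv_sq hcτ
  refine ⟨fun hs => ?_, fun hs => ?_⟩
  · exact (tendsto_exp_mul_const_atTop_nhds_zero (by linarith)).congr' hexp.symm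
  · exact (tendsto_exp_mul_const_atTop_atTop (by linarith)).congr' hexp.symm

/-- Let `n ≥ 2`, `ω, ω⊥` orthonormal in `ℝⁿ`, `c > 0`, and for `τ > c⁻²` let
`z(τ) = cτ(ω + i√(1-1/(c²τ)) ω⊥)` and `v(x,t;τ) = exp(-(z·z)t) exp(x·z)`.
Fix `s ∈ ℝ` and `(x,t)`.  If `s < t - c x·ω` then `e^{τs}|v(x,t;τ)| → 0` as
`τ → ∞`, and if `s > t - c x·ω` then `e^{τs}|v(x,t;τ)| → ∞`. -/
theorem stmt7 (n : ℕ) (hn : 2 ≤ n)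
    (ω ωperp : EuclideanSpace ℝ (Fin n))
    (hω : ‖ω‖ = 1) (hωperp : ‖ωperp‖ = 1) (horth : (inner ℝ ω ωperp : ℝ) = 0)
    (c : ℝ) (hc : 0 < c)
    (z : ℝ → Fin n → ℂ)
    (hz : ∀ τ : ℝ, c⁻¹ ^ 2 < τ → ∀ j, z τ j = (c : ℂ) * τ *
      ((ω j : ℂ) + Complex.I * (Real.sqrt (1 - 1 / (c ^ 2 * τ)) : ℂ) * (ωperp j : ℂ)))
    (v : EuclideanSpace ℝ (Fin n) → ℝ → ℝ → ℂ)
    (hv : ∀ x t τ, v x t τ =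
      Complex.exp (-(∑ j, z τ j ^ 2) * t) * Complex.exp (∑ j, (x j : ℂ) * z τ j))
    (x : EuclideanSpace ℝ (Fin n)) (t s : ℝ) :
    (s < t - c * (inner ℝ x ω : ℝ) →
      Tendsto (fun τ : ℝ => Real.exp (τ * s) * ‖v x t τ‖) atTop (nhds 0)) ∧
    (s > t - c * (inner ℝ x ω : ℝ) →
      Tendsto (fun τ : ℝ => Real.exp (τ * s) * ‖v x t τ‖) atTop atTop) :=
  stmt7_general n ω ωperp hω hωperp horth c hc z hz v hv x t s
end

section
/- Let δ > 0, C₁, C₂ > 0, p ≥ 0, T₀ ∈ ℝ, ω ∈ ℝⁿ a unit vector, and let Ω ⊂ ℝⁿ be bounded. Suppose D ⊂ Ω̄ × [T₀, T₀+δ] is measurable, ρ : D → ℝ is measurable with ρ ≥ C₂ a.e. on D, and the slices D(s) = {x : (x, T₀+s) ∈ D} satisfy |D(s)| ≥ C₁ s^p for a.e. s ∈ [0, δ]. Then for all τ > 0, e^{τT₀} ∫_D ρ(x,t) e^{√τ x·ω - τt} dx dt ≥ C₁ C₂ e^{√τ m} τ^{-(p+1)} ∫₀^{τδ} ξ^p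 e^{-ξ} dξ, where m = inf_{x∈Ω} x·ω. -/
/-!
On `D` one has `x ⬝ ω ≥ m` and `ρ ≥ C₂`, so the integrand dominates `C₂ e^{√τ m} e^{-τ t}`.
Slicing in time (Tonelli), `∫_D e^{-τ t} = ∫ e^{-τ t} |D(t)| dt ≥ C₁ ∫₀^δ e^{-τ (T₀ + s)} s^p ds`,
and the substitution `ξ = τ s` turns the last integral into
`e^{-τ T₀} τ^{-(p+1)} ∫₀^{τδ} ξ^p e^{-ξ} dξ`.
-/

open MeasureTheory Set
open scoped ENNReal

theorem intervalIntegral_rpow_mul_exp_neg_mul (p : ℝ) {τ δ : ℝ} (hτ : 0 < τ) (hδ : 0 ≤ δ) :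
    ∫ s in 0..δ, s ^ p * Real.exp (-(τ * s))
      = τ ^ (-(p + 1)) * ∫ ξ in 0..τ * δ, ξ ^ p * Real.exp (-ξ) := by
  have h := intervalIntegral.integral_comp_mul_left (fun ξ => ξ ^ p * Real.exp (-ξ)) hτ.ne'
    (a := 0) (b := δ)
  rw [mul_zero, smul_eq_mul] at h
  rw [neg_add, Real.rpow_add hτ, Real.rpow_neg_one, mul_assoc, ← h,
    ← intervalIntegral.integral_const_mul]
  refine intervalIntegral.integral_congr fun s hs => ?_
  rw [uIcc_of_le hδ] at hs
  have hτp : τ ^ p ≠ 0 := (Real.rpow_pos_of_pos hτ p).ne'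
  simp only [Real.mul_rpow hτ.le hs.1, Real.rpow_neg hτ.le, mul_assoc, inv_mul_cancel_left₀ hτp]

section Slices

variable {X : Type*} [MeasurableSpace X] {μ : Measure X} [SFinite μ]

theorem setLIntegral_comp_snd_eq_lintegral_mul_slice {Y : Type*} [MeasurableSpace Y]
    {ν : Measure Y} [SFinite ν] {D : Set (X × Y)} (hD : MeasurableSet D)
    {g : Y → ℝ≥0∞} (hg : Measurable g) :
    ∫⁻ z in D, g z.2 ∂μ.prod ν = ∫⁻ y, g y * μ {x | (x, y) ∈ D} ∂ν := by
  have hgD : Measurable (D.indicator fun z : X × Y => g z.2) :=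
    (hg.comp measurable_snd).indicator hD
  rw [← lintegral_indicator hD, lintegral_prod_symm' _ hgD]
  refine lintegral_congr fun y => ?_
  have hDy : MeasurableSet {x | (x, y) ∈ D} := measurable_prodMk_right hD
  rw [← setLIntegral_const, ← lintegral_indicator hDy]
  rfl

theorem setLIntegral_mul_ofReal_le_setLIntegral_comp_snd {D : Set (X × ℝ)} (hD : MeasurableSet D)
    {g : ℝ → ℝ≥0∞} (hg : Measurable g) (T₀ : ℝ) {S : Set ℝ} {f : ℝ → ℝ}
    (hslice : ∀ᵐ s ∂volume.restrict S, f s ≤ (μ {x | (x, T₀ + s) ∈ D}).toReal) :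
    ∫⁻ s in S, g (T₀ + s) * ENNReal.ofReal (f s) ≤ ∫⁻ z in D, g z.2 ∂μ.prod volume := by
  rw [setLIntegral_comp_snd_eq_lintegral_mul_slice hD hg,
    ← lintegral_add_left_eq_self (fun t => g t * μ {x | (x, t) ∈ D}) T₀]
  refine (lintegral_mono_ae ?_).trans (setLIntegral_le_lintegral S _)
  filter_upwards [hslice] with s hs
  gcongr
  exact ENNReal.ofReal_le_of_le_toReal hs

theorem setIntegral_mul_le_setIntegral_comp_snd {D : Set (X × ℝ)} (hD : MeasurableSet D)
    {w : ℝ → ℝ} (hw : Measurable w) (hw_nonneg : ∀ t, 0 ≤ w t)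
    (hwD : IntegrableOn (fun z => w z.2) D (μ.prod volume)) (T₀ : ℝ) {S : Set ℝ} {f : ℝ → ℝ}
    (hf_nonneg : 0 ≤ᵐ[volume.restrict S] f) (hf : IntegrableOn (fun s => w (T₀ + s) * f s) S)
    (hslice : ∀ᵐ s ∂volume.restrict S, f s ≤ (μ {x | (x, T₀ + s) ∈ D}).toReal) :
    ∫ s in S, w (T₀ + s) * f s ≤ ∫ z in D, w z.2 ∂μ.prod volume := by
  have key := setLIntegral_mul_ofReal_le_setLIntegral_comp_snd hD
    (ENNReal.measurable_ofReal.comp hw) T₀ hslice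
  simp_rw [Function.comp_apply, ← ENNReal.ofReal_mul (hw_nonneg _)] at key
  rw [← ofReal_integral_eq_lintegral_ofReal hwD (.of_forall fun z : X × ℝ => hw_nonneg z.2),
    ← ofReal_integral_eq_lintegral_ofReal hf
      (by filter_upwards [hf_nonneg] with s hs using mul_nonneg (hw_nonneg _) hs)] at key
  exact (ENNReal.ofReal_le_ofReal_iff (integral_nonneg fun z : X × ℝ => hw_nonneg z.2)).1 key

theorem le_exp_mul_setIntegral_exp_neg_mul_snd {D : Set (X × ℝ)} (hD : MeasurableSet D)
    {δ C₁ p τ T₀ : ℝ} (hδ : 0 ≤ δ) (hC₁ : 0 ≤ C₁) (hp : 0 ≤ p) (hτ : 0 < τ)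
    (hint : IntegrableOn (fun z => Real.exp (-(τ * z.2))) D (μ.prod volume))
    (hslice : ∀ᵐ s ∂volume.restrict (Icc 0 δ),
      C₁ * s ^ p ≤ (μ {x | (x, T₀ + s) ∈ D}).toReal) :
    C₁ * τ ^ (-(p + 1)) * ∫ ξ in 0..τ * δ, ξ ^ p * Real.exp (-ξ)
      ≤ Real.exp (τ * T₀) * ∫ z in D, Real.exp (-(τ * z.2)) ∂μ.prod volume := by
  have hslab := setIntegral_mul_le_setIntegral_comp_snd hD (by fun_prop)
    (fun t => (Real.exp_pos (-(τ * t))).le) hint T₀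
    (ae_restrict_of_forall_mem measurableSet_Icc fun s hs => by have := hs.1; positivity)
    ((by fun_prop (disch := exact fun _ => Or.inr hp) :
      Continuous fun s => Real.exp (-(τ * (T₀ + s))) * (C₁ * s ^ p)).integrableOn_Icc) hslice
  have hslab_eq : ∫ s in Icc 0 δ, Real.exp (-(τ * (T₀ + s))) * (C₁ * s ^ p)
      = (Real.exp (τ * T₀))⁻¹ * (C₁ * τ ^ (-(p + 1)) * ∫ ξ in 0..τ * δ, ξ ^ p * Real.exp (-ξ)) := by
    rw [mul_assoc C₁, ← intervalIntegral_rpow_mul_exp_neg_mul p hτ hδ,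
      intervalIntegral.integral_of_le hδ, ← integral_Icc_eq_integral_Ioc, ← integral_const_mul, ← integral_const_mul]
    congr 1 with s
    rw [← Real.exp_neg, mul_add, neg_add, Real.exp_add]
    ring
  rwa [hslab_eq, inv_mul_le_iff₀ (Real.exp_pos _)] at hslab

end Slices

theorem sInf_image_le_of_mem_closure {E α : Type*} [TopologicalSpace E]
    [ConditionallyCompleteLattice α] [TopologicalSpace α] [ClosedIciTopology α] {f : E → α}
    (hf : Continuous f) {Ω : Set E} (hΩ : BddBelow (f '' Ω)) {x : E} (hx : x ∈ closure Ω) :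
    sInf (f '' Ω) ≤ f x := by
  have hne : (f '' Ω).Nonempty := (closure_nonempty_iff.1 ⟨x, hx⟩).image f
  have hlb : sInf (f '' Ω) ∈ lowerBounds (closure (f '' Ω)) := by
    rw [lowerBounds_closure]
    exact (isGLB_csInf hne hΩ).1
  exact hlb (image_closure_subset_closure_image hf (mem_image_of_mem f hx))

theorem sInf_image_inner_le_inner_of_mem_closure {E : Type*} [NormedAddCommGroup E]
    [InnerProductSpace ℝ E] {Ω : Set E} (hΩ : Bornology.IsBounded Ω) (ω : E) {x : E}
    (hx : x ∈ closure Ω) : sInf ((fun y => inner ℝ y ω) '' Ω) ≤ inner ℝ x ω := by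
  refine sInf_image_le_of_mem_closure (by fun_prop) ?_ hx
  simpa [real_inner_comm ω] using ((innerSL ℝ ω).lipschitz.isBounded_image hΩ).bddBelow

theorem stmt16_general (n : ℕ) (δ C₁ C₂ p T₀ : ℝ)
    (hδ : 0 < δ) (hC₁ : 0 < C₁) (hC₂ : 0 < C₂) (hp : 0 ≤ p)
    (ω : EuclideanSpace ℝ (Fin n))
    (Ω : Set (EuclideanSpace ℝ (Fin n))) (hΩb : Bornology.IsBounded Ω)
    (D : Set (EuclideanSpace ℝ (Fin n) × ℝ)) (hD : MeasurableSet D)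
    (hDsub : D ⊆ (closure Ω) ×ˢ Set.Icc T₀ (T₀ + δ))
    (ρ : EuclideanSpace ℝ (Fin n) × ℝ → ℝ)
    (hρ : ∀ᵐ z ∂(volume.restrict D), C₂ ≤ ρ z)
    (hslice : ∀ᵐ s ∂(volume.restrict (Set.Icc (0:ℝ) δ)),
      C₁ * s ^ p ≤ (volume {x | (x, T₀ + s) ∈ D}).toReal)
    (hint : ∀ τ : ℝ, 0 < τ → IntegrableOn
      (fun z => ρ z * Real.exp (Real.sqrt τ * (inner ℝ z.1 ω : ℝ) - τ * z.2)) D volume)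
    (m : ℝ) (hm : m = sInf ((fun x => (inner ℝ x ω : ℝ)) '' Ω)) :
    ∀ τ : ℝ, 0 < τ →
      C₁ * C₂ * Real.exp (Real.sqrt τ * m) * τ ^ (-(p + 1)) *
          ∫ ξ in (0:ℝ)..(τ * δ), ξ ^ p * Real.exp (-ξ)
        ≤ Real.exp (τ * T₀) *
            ∫ z in D, ρ z * Real.exp (Real.sqrt τ * (inner ℝ z.1 ω : ℝ) - τ * z.2) := by
  intro τ hτ
  set c := C₂ * Real.exp (Real.sqrt τ * m)
  have hc : 0 < c := by positivity
  have hlower : ∀ᵐ z ∂volume.restrict D, c * Real.exp (-(τ * z.2))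
      ≤ ρ z * Real.exp (Real.sqrt τ * inner ℝ z.1 ω - τ * z.2) := by
    filter_upwards [hρ, ae_restrict_mem hD] with z hρz hz
    have hmz : m ≤ inner ℝ z.1 ω := hm ▸ sInf_image_inner_le_inner_of_mem_closure hΩb ω (hDsub hz).1
    rw [mul_assoc, ← Real.exp_add]
    gcongr
    · linarith
    · nlinarith [Real.sqrt_nonneg τ]
  have hexp_int : IntegrableOn (fun z : EuclideanSpace ℝ (Fin n) × ℝ => Real.exp (-(τ * z.2)))
      D (volume.prod volume) := by
    refine (integrable_const_mul_iff (isUnit_iff_ne_zero.2 hc.ne') _).1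
      ((hint τ hτ).mono' (by fun_prop) ?_)
    filter_upwards [hlower] with z hz
    rwa [Real.norm_of_nonneg (by positivity)]
  calc C₁ * C₂ * Real.exp (Real.sqrt τ * m) * τ ^ (-(p + 1)) *
        ∫ ξ in (0:ℝ)..(τ * δ), ξ ^ p * Real.exp (-ξ)
      = c * (C₁ * τ ^ (-(p + 1)) * ∫ ξ in (0:ℝ)..(τ * δ), ξ ^ p * Real.exp (-ξ)) := by ring
    _ ≤ c * (Real.exp (τ * T₀) * ∫ z in D, Real.exp (-(τ * z.2))) :=
        mul_le_mul_of_nonneg_left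
          (le_exp_mul_setIntegral_exp_neg_mul_snd hD hδ.le hC₁.le hp hτ hexp_int hslice) hc.le
    _ = Real.exp (τ * T₀) * ∫ z in D, c * Real.exp (-(τ * z.2)) := by
        rw [integral_const_mul]
        ring
    _ ≤ _ := by
        gcongr ?_ * ?_
        exact integral_mono_ae (hexp_int.const_mul c) (hint τ hτ) hlower

/-- Lower bound (Lemma 3.1, left half).  Let `δ, C₁, C₂ > 0`, `p ≥ 0`,
`T₀ ∈ ℝ`, `ω` a unit vector, `Ω` bounded.  Suppose `D ⊆ Ω̄ × [T₀, T₀+δ]` is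
measurable, `ρ ≥ C₂` a.e. on `D`, and the slices
`D(s) = {x : (x, T₀+s) ∈ D}` satisfy `|D(s)| ≥ C₁ s^p` for a.e. `s ∈ [0, δ]`.
Then for all `τ > 0`,
`e^{τT₀} ∫_D ρ e^{√τ x·ω - τt} ≥ C₁C₂ e^{√τ m} τ^{-(p+1)} ∫₀^{τδ} ξ^p e^{-ξ} dξ`
with `m = inf_{x ∈ Ω} x·ω`. -/
theorem stmt16 (n : ℕ) (δ C₁ C₂ p T₀ : ℝ)
    (hδ : 0 < δ) (hC₁ : 0 < C₁) (hC₂ : 0 < C₂) (hp : 0 ≤ p)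
    (ω : EuclideanSpace ℝ (Fin n)) (hω : ‖ω‖ = 1)
    (Ω : Set (EuclideanSpace ℝ (Fin n))) (hΩb : Bornology.IsBounded Ω)
    (hΩne : Ω.Nonempty)
    (D : Set (EuclideanSpace ℝ (Fin n) × ℝ)) (hD : MeasurableSet D)
    (hDsub : D ⊆ (closure Ω) ×ˢ Set.Icc T₀ (T₀ + δ))
    (ρ : EuclideanSpace ℝ (Fin n) × ℝ → ℝ) (hρm : Measurable ρ)
    (hρ : ∀ᵐ z ∂(volume.restrict D), C₂ ≤ ρ z)
    (hslice : ∀ᵐ s ∂(volume.restrict (Set.Icc (0:ℝ) δ)),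
      C₁ * s ^ p ≤ (volume {x | (x, T₀ + s) ∈ D}).toReal)
    (hint : ∀ τ : ℝ, 0 < τ → IntegrableOn
      (fun z => ρ z * Real.exp (Real.sqrt τ * (inner ℝ z.1 ω : ℝ) - τ * z.2)) D volume)
    (m : ℝ) (hm : m = sInf ((fun x => (inner ℝ x ω : ℝ)) '' Ω)) :
    ∀ τ : ℝ, 0 < τ →
      C₁ * C₂ * Real.exp (Real.sqrt τ * m) * τ ^ (-(p + 1)) *
          ∫ ξ in (0:ℝ)..(τ * δ), ξ ^ p * Real.exp (-ξ)
        ≤ Real.exp (τ * T₀) *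
            ∫ z in D, ρ z * Real.exp (Real.sqrt τ * (inner ℝ z.1 ω : ℝ) - τ * z.2) :=
  stmt16_general n δ C₁ C₂ p T₀ hδ hC₁ hC₂ hp ω Ω hΩb D hD hDsub ρ hρ hslice hint m hm
end
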